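/- The quotient group of the free group on generators x, y, z, w by the normal closure of the relators (y z⁻¹)(x w⁻¹)⁻¹, (y w⁻¹)(z x⁻¹)⁻¹, (z w⁻¹)(x y⁻¹)⁻¹, and w is isomorphic to the quaternion group Q₈. -/

import Mathlib

/-!
Once `w = 1`, the relations say `z = y x`, `y² = x²` and `x y = y x⁻¹`; conjugating `x²` by `y`
then gives `x² = x⁻²`, i.e. `x⁴ = 1`. These are the defining relations of `Q₈` in the generators
`i, j`, so `i ↦ x, j ↦ y` is a homomorphism from `Q₈` to the presented group,
inverse to `x ↦ i, y ↦ j, z ↦ -k, w ↦ 1`.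
-/

/-- Relators of the presentation of the fundamental group of the hypercubical manifold:
generators `0, 1, 2, 3` are `x, y, z, w`, relators are `(y z⁻¹)(x w⁻¹)⁻¹`, `(y w⁻¹)(z x⁻¹)⁻¹`,
`(z w⁻¹)(x y⁻¹)⁻¹` and `w`. -/
def hmRels : Set (FreeGroup (Fin 4)) :=
  { (FreeGroup.of 1 * (FreeGroup.of 2)⁻¹) * (FreeGroup.of 0 * (FreeGroup.of 3)⁻¹)⁻¹,
    (FreeGroup.of 1 * (FreeGroup.of 3)⁻¹) * (FreeGroup.of 2 * (FreeGroup.of 0)⁻¹)⁻¹,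
    (FreeGroup.of 2 * (FreeGroup.of 3)⁻¹) * (FreeGroup.of 0 * (FreeGroup.of 1)⁻¹)⁻¹,
    FreeGroup.of 3 }

namespace ZMod

variable {G : Type*} [Group G] {m : ℕ}

def powHom (x : G) (hx : x ^ m = 1) : Multiplicative (ZMod m) →* G :=
  AddMonoidHom.toMultiplicativeLeft <| ZMod.lift m
    ⟨zmultiplesHom (Additive G) (Additive.ofMul x), by simpa using congrArg Additive.ofMul hx⟩

theorem powHom_intCast (x : G) (hx : x ^ m = 1) (k : ℤ) :
    powHom x hx (.ofAdd (k : ZMod m)) = x ^ k := by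
  simp [powHom]

theorem powHom_natCast (x : G) (hx : x ^ m = 1) (k : ℕ) :
    powHom x hx (.ofAdd (k : ZMod m)) = x ^ k := by
  exact_mod_cast powHom_intCast x hx k

theorem powHom_mul_eq_mul_powHom_neg {x y : G} (hx : x ^ m = 1) (hxy : x * y = y * x⁻¹)
    (i : ZMod m) : powHom x hx (.ofAdd i) * y = y * powHom x hx (.ofAdd (-i)) := by
  obtain ⟨k, rfl⟩ := ZMod.intCast_surjective i
  have hconj : SemiconjBy y x⁻¹ x := hxy.symm
  rw [← Int.cast_neg, powHom_intCast, powHom_intCast, zpow_neg, ← inv_zpow]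
  exact (hconj.zpow_right k).eq.symm

end ZMod

namespace QuaternionGroup

variable {n : ℕ} {G : Type*} [Group G]

theorem a_one_zpow (k : ℤ) : (a 1 : QuaternionGroup n) ^ k = a k := by
  cases k with
  | ofNat k => simp [a_one_pow]
  | negSucc k => rw [zpow_negSucc, a_one_pow, Int.cast_negSucc]; rfl

theorem hom_ext {f g : QuaternionGroup n →* G} (ha : f (a 1) = g (a 1))
    (hxa : f (xa 0) = g (xa 0)) : f = g := by
  have h_a (i : ZMod (2 * n)) : f (a i) = g (a i) := by
    obtain ⟨k, rfl⟩ := ZMod.intCast_surjective i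
    rw [← a_one_zpow, map_zpow, map_zpow, ha]
  ext (i | i)
  · exact h_a i
  · rw [← zero_add i, ← xa_mul_a, map_mul, map_mul, hxa, h_a]

section lift

variable (x y : G) (hx : x ^ (2 * n) = 1) (hy : y ^ 2 = x ^ n) (hxy : x * y = y * x⁻¹)

def liftFun : QuaternionGroup n → G
  | a i => ZMod.powHom x hx (.ofAdd i)
  | xa i => y * ZMod.powHom x hx (.ofAdd i)

def lift : QuaternionGroup n →* G where
  toFun := liftFun x y hx
  map_one' := by rw [one_def]; simp [liftFun]
  map_mul' := by
    have hmul (i j : ZMod (2 * n)) := map_mul (ZMod.powHom x hx) (.ofAdd i) (.ofAdd j)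
    have hcomm := ZMod.powHom_mul_eq_mul_powHom_neg hx hxy
    rintro (i | i) (j | j)
    · simp [liftFun, a_mul_a, hmul]
    · calc y * ZMod.powHom x hx (.ofAdd (j - i))
          = y * ZMod.powHom x hx (.ofAdd (-i)) * ZMod.powHom x hx (.ofAdd j) := by
            rw [sub_eq_neg_add, ofAdd_add, map_mul, mul_assoc]
        _ = _ := by rw [← hcomm, mul_assoc]; rfl
    · simp [liftFun, xa_mul_a, hmul, mul_assoc]
    · calc ZMod.powHom x hx (.ofAdd (n + j - i))
          = y ^ 2 * ZMod.powHom x hx (.ofAdd (-i)) * ZMod.powHom x hx (.ofAdd j) := by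
            rw [hy, ← ZMod.powHom_natCast x hx, add_sub_assoc, sub_eq_neg_add, ofAdd_add,
              ofAdd_add, map_mul, map_mul, mul_assoc]
        _ = _ := by
          rw [sq, mul_assoc y y, ← hcomm]
          simp only [liftFun, mul_assoc]

theorem lift_a_one : lift x y hx hy hxy (a 1) = x := by
  change ZMod.powHom x hx (.ofAdd 1) = x
  simpa using ZMod.powHom_natCast x hx 1

theorem lift_xa_zero : lift x y hx hy hxy (xa 0) = y := by
  change y * ZMod.powHom x hx (.ofAdd 0) = y
  rw [ofAdd_zero, map_one, mul_one]

end lift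

end QuaternionGroup

section HypercubicalRelations

variable {G : Type*} [Group G] {x y z : G}

theorem sq_eq_sq_of_hypercubical (h₁ : y * z⁻¹ = x) (h₃ : z = x * y⁻¹) : y ^ 2 = x ^ 2 := by
  have h : y * y * x⁻¹ = x :=
    calc y * y * x⁻¹ = y * (x * y⁻¹)⁻¹ := by group
      _ = x := by rw [← h₃, h₁]
  rw [sq, sq, mul_inv_eq_iff_eq_mul.mp h]

theorem mul_eq_inv_mul_of_hypercubical (h₁ : y * z⁻¹ = x) (h₂ : y = z * x⁻¹)
    (h₃ : z = x * y⁻¹) : y * x = x⁻¹ * y :=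
  calc y * x = x * y⁻¹ := by rw [eq_mul_inv_iff_mul_eq.mp h₂, h₃]
    _ = x * (y ^ 2)⁻¹ * y := by group
    _ = x⁻¹ * y := by rw [sq_eq_sq_of_hypercubical h₁ h₃]; group

theorem mul_eq_mul_inv_of_hypercubical (h₁ : y * z⁻¹ = x) (h₂ : y = z * x⁻¹)
    (h₃ : z = x * y⁻¹) : x * y = y * x⁻¹ := by
  have h : y⁻¹ * x⁻¹ * y = x := by
    rw [mul_assoc]
    exact (eq_inv_mul_iff_mul_eq.mpr (mul_eq_inv_mul_of_hypercubical h₁ h₂ h₃)).symm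
  calc x * y = y * (y⁻¹ * x⁻¹ * y)⁻¹ := by group
    _ = y * x⁻¹ := by rw [h]

theorem pow_four_eq_one_of_hypercubical (h₁ : y * z⁻¹ = x) (h₂ : y = z * x⁻¹)
    (h₃ : z = x * y⁻¹) : x ^ (2 * 2) = 1 := by
  have hsq := sq_eq_sq_of_hypercubical h₁ h₃
  have hconj : SemiconjBy y x x⁻¹ := mul_eq_inv_mul_of_hypercubical h₁ h₂ h₃
  have h : y * x ^ 2 = x⁻¹ ^ 2 * y := (hconj.pow_right 2).eq
  rw [← hsq, ← pow_succ', pow_succ, hsq, mul_left_inj, inv_pow] at h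
  rw [pow_mul, sq]
  exact mul_eq_one_iff_eq_inv.mpr h

end HypercubicalRelations

open PresentedGroup in
theorem presentedGroup_hmRels_relations :
    (of 1 * (of 2)⁻¹ : PresentedGroup hmRels) = of 0 ∧
    (of 1 : PresentedGroup hmRels) = of 2 * (of 0)⁻¹ ∧
    (of 2 : PresentedGroup hmRels) = of 0 * (of 1)⁻¹ ∧ (of 3 : PresentedGroup hmRels) = 1 := by
  have h₁ : (of 1 * (of 2)⁻¹) * (of 0 * (of 3)⁻¹)⁻¹ = (1 : PresentedGroup hmRels) :=
    one_of_mem (by simp [hmRels])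
  have h₂ : (of 1 * (of 3)⁻¹) * (of 2 * (of 0)⁻¹)⁻¹ = (1 : PresentedGroup hmRels) :=
    one_of_mem (by simp [hmRels])
  have h₃ : (of 2 * (of 3)⁻¹) * (of 0 * (of 1)⁻¹)⁻¹ = (1 : PresentedGroup hmRels) :=
    one_of_mem (by simp [hmRels])
  have hw : (of 3 : PresentedGroup hmRels) = 1 := one_of_mem (by simp [hmRels])
  simp only [hw, inv_one, mul_one, mul_inv_eq_one] at h₁ h₂ h₃
  exact ⟨h₁, h₂, h₃, hw⟩

open QuaternionGroup in
theorem lift_hmRels_eq_one :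
    ∀ r ∈ hmRels, FreeGroup.lift ![a 1, xa 0, xa 1, 1] r = (1 : QuaternionGroup 2) := by
  rintro r (rfl | rfl | rfl | rfl) <;> decide

/-- The quotient of the free group on `x, y, z, w` by the normal closure of the relators
`(y z⁻¹)(x w⁻¹)⁻¹`, `(y w⁻¹)(z x⁻¹)⁻¹`, `(z w⁻¹)(x y⁻¹)⁻¹` and `w` is isomorphic to the
quaternion group `Q₈`. -/
theorem hypercubical_fundamental_group_presentation :
    Nonempty (PresentedGroup hmRels ≃* QuaternionGroup 2) := by
  obtain ⟨h₁, h₂, h₃, hw⟩ := presentedGroup_hmRels_relations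
  set φ := PresentedGroup.toGroup lift_hmRels_eq_one
  set ψ := QuaternionGroup.lift _ _ (pow_four_eq_one_of_hypercubical h₁ h₂ h₃)
    (sq_eq_sq_of_hypercubical h₁ h₃) (mul_eq_mul_inv_of_hypercubical h₁ h₂ h₃)
  have hψa : ψ (.a 1) = .of 0 := QuaternionGroup.lift_a_one ..
  have hψxa₀ : ψ (.xa 0) = .of 1 := QuaternionGroup.lift_xa_zero ..
  have hψxa₁ : ψ (.xa 1) = .of 2 := by
    rw [← zero_add 1, ← QuaternionGroup.xa_mul_a, map_mul, hψa, hψxa₀]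
    exact eq_mul_inv_iff_mul_eq.mp h₂
  refine ⟨φ.toMulEquiv ψ ?_ ?_⟩
  · refine PresentedGroup.ext fun i => ?_
    rw [MonoidHom.comp_apply, PresentedGroup.toGroup.of, MonoidHom.id_apply]
    fin_cases i
    exacts [hψa, hψxa₀, hψxa₁, (map_one ψ).trans hw.symm]
  · refine QuaternionGroup.hom_ext ?_ ?_
    · simp [φ, hψa]
    · simp [φ, hψxa₀]
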